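/- arXiv:1703.09600 — 2 statements merged into one kernel-verified Lean document; each statement's English description precedes it below -/
import Mathlib

section
/- Let P ⊂ ℝ^m and Q ⊂ ℝ^n be lattice polytopes, and define their join P ⋆ Q := conv({(x, 0_n, 0) : x ∈ P} ∪ {(0_m, y, 1) : y ∈ Q}) ⊂ ℝ^{m+n+1}, where 0_i denotes the origin of ℝ^i. Then P ⋆ Q is a lattice polytope of dimension dim P + dim Q + 1 and its h*-polynomial satisfies h*_{P⋆Q}(t) = h*_P(t) · h*_Q(t). -/
open scoped Pointwise

/-- A point of `ℝ^n` with integer coordinates. -/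
def isLatticePoint {n : ℕ} (x : Fin n → ℝ) : Prop :=
  ∀ i, ∃ z : ℤ, x i = (z : ℝ)

/-- The lattice `ℤ^n` as a subset of `ℝ^n`. -/
def latticeSet (n : ℕ) : Set (Fin n → ℝ) := {x | isLatticePoint x}

/-- A lattice polytope: the convex hull of a finite set of lattice points. -/
def IsLatticePolytope {n : ℕ} (P : Set (Fin n → ℝ)) : Prop :=
  ∃ S : Finset (Fin n → ℝ), (∀ x ∈ S, isLatticePoint x) ∧
    P = convexHull ℝ (S : Set (Fin n → ℝ))

/-- The `k`-th dilate of `P`, with `0 • P := {0}`. -/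
noncomputable def dilate {n : ℕ} (k : ℕ) (P : Set (Fin n → ℝ)) : Set (Fin n → ℝ) :=
  if k = 0 then {0} else (k : ℝ) • P

/-- The Ehrhart counting function `k ↦ |kP ∩ ℤ^n|`. -/
noncomputable def ehrhart {n : ℕ} (P : Set (Fin n → ℝ)) (k : ℕ) : ℕ :=
  (dilate k P ∩ latticeSet n).ncard

/-- The dimension of a polytope: the dimension of its affine hull. -/
noncomputable def polyDim {n : ℕ} (P : Set (Fin n → ℝ)) : ℕ :=
  Module.finrank ℝ (affineSpan ℝ P).direction

/-- `h : ℕ → ℤ` is the coefficient sequence of the `h^*`-polynomial of `P`, i.e. the unique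
polynomial of degree at most `d = dim P` with
`(1-t)^(d+1) * ∑_{k ≥ 0} |kP ∩ ℤ^n| t^k = ∑ h i t^i`. -/
def IsHStar {n : ℕ} (P : Set (Fin n → ℝ)) (h : ℕ → ℤ) : Prop :=
  (∀ i, polyDim P < i → h i = 0) ∧
    (1 - PowerSeries.X) ^ (polyDim P + 1) *
      PowerSeries.mk (fun k => (ehrhart P k : ℤ)) = PowerSeries.mk h

/-- The affine lattice generated by a set `S`: all integral affine combinations of points
of `S`. -/
def affLatticeSpan {n : ℕ} (S : Set (Fin n → ℝ)) : Set (Fin n → ℝ) :=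
  {y | ∃ (m : ℕ) (a : Fin m → ℤ) (x : Fin m → Fin n → ℝ),
    (∀ j, x j ∈ S) ∧ (∑ j, a j) = 1 ∧ y = ∑ j, (a j : ℝ) • x j}

/-- The join `P ⋆ Q ⊂ ℝ^{m+n+1}` of `P ⊂ ℝ^m` and `Q ⊂ ℝ^n`:
`conv({(x, 0ₙ, 0) : x ∈ P} ∪ {(0ₘ, y, 1) : y ∈ Q})`. -/
noncomputable def joinSet {m n : ℕ} (P : Set (Fin m → ℝ)) (Q : Set (Fin n → ℝ)) :
    Set (Fin (m + n + 1) → ℝ) :=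
  convexHull ℝ
    (((fun x : Fin m → ℝ => Fin.append (Fin.append x (0 : Fin n → ℝ)) ![(0 : ℝ)]) '' P) ∪
      ((fun y : Fin n → ℝ => Fin.append (Fin.append (0 : Fin m → ℝ) y) ![(1 : ℝ)]) '' Q))

/-!
A point of `k • (P ⋆ Q)` has the form `(a, b, t)` with `0 ≤ t ≤ k`, `a ∈ (k - t) • P` and
`b ∈ t • Q`. At a lattice point `t = j` is an integer, so the lattice points of `k • (P ⋆ Q)` are
partitioned by `j` into products of the lattice points of `(k - j) • P` and of `j • Q`: the
Ehrhart series of `P ⋆ Q` is the product of those of `P` and `Q`. As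
`dim (P ⋆ Q) + 1 = (dim P + 1) + (dim Q + 1)`, the `h^*`-polynomials multiply as well. The
dimension count holds because `P` and `Q` land in skew affine subspaces: last coordinate `0`
resp. `1`, with independent directions.
-/

open Module in
theorem AffineSubspace.finrank_direction_sup_of_disjoint {k V P : Type*} [DivisionRing k]
    [AddCommGroup V] [Module k V] [FiniteDimensional k V] [AddTorsor V P]
    {s₁ s₂ : AffineSubspace k P} (h₁ : (s₁ : Set P).Nonempty) (h₂ : (s₂ : Set P).Nonempty)
    (hs : Disjoint (s₁ : Set P) s₂) (hd : Disjoint s₁.direction s₂.direction) :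
    finrank k (s₁ ⊔ s₂).direction = finrank k s₁.direction + finrank k s₂.direction + 1 := by
  obtain ⟨p₁, hp₁⟩ := h₁
  obtain ⟨p₂, hp₂⟩ := h₂
  have hv : p₂ -ᵥ p₁ ∉ s₁.direction ⊔ s₂.direction := by
    intro hv
    obtain ⟨u₁, hu₁, u₂, hu₂, hu⟩ := Submodule.mem_sup.1 hv
    have hmeet : u₁ +ᵥ p₁ = -u₂ +ᵥ p₂ := by
      rw [← vsub_vadd p₂ p₁, vadd_vadd, ← hu, add_comm u₁, neg_add_cancel_left]
    refine Set.disjoint_left.1 hs (AffineSubspace.vadd_mem_of_mem_direction hu₁ hp₁) ?_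
    rw [hmeet]
    exact AffineSubspace.vadd_mem_of_mem_direction (neg_mem hu₂) hp₂
  rw [AffineSubspace.direction_sup hp₁ hp₂, Submodule.finrank_sup_span_singleton hv,
    ← Submodule.finrank_sup_add_finrank_inf_eq, hd.eq_bot, finrank_bot, add_zero]

lemma mem_latticeSet {n : ℕ} {x : Fin n → ℝ} : x ∈ latticeSet n ↔ isLatticePoint x := Iff.rfl

section Append3

variable {m n : ℕ}

def append3 (x : Fin m → ℝ) (y : Fin n → ℝ) (t : ℝ) : Fin (m + n + 1) → ℝ :=
  Fin.append (Fin.append x y) ![t]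

lemma append3_add (x x' : Fin m → ℝ) (y y' : Fin n → ℝ) (t t' : ℝ) :
    append3 x y t + append3 x' y' t' = append3 (x + x') (y + y') (t + t') := by
  ext i
  refine Fin.addCases (Fin.addCases ?_ ?_) ?_ i <;> simp [append3]

lemma append3_smul (r : ℝ) (x : Fin m → ℝ) (y : Fin n → ℝ) (t : ℝ) :
    r • append3 x y t = append3 (r • x) (r • y) (r * t) := by
  ext i
  refine Fin.addCases (Fin.addCases ?_ ?_) ?_ i <;> simp [append3]

@[simp] lemma append3_zero : append3 (0 : Fin m → ℝ) (0 : Fin n → ℝ) 0 = 0 := by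
  ext i
  refine Fin.addCases (Fin.addCases ?_ ?_) ?_ i <;> simp [append3]

@[simp] lemma append3_last (x : Fin m → ℝ) (y : Fin n → ℝ) (t : ℝ) :
    append3 x y t (Fin.last _) = t := by
  show append3 x y t (Fin.natAdd (m + n) 0) = t
  simp [append3]

lemma append3_inj {x x' : Fin m → ℝ} {y y' : Fin n → ℝ} {t t' : ℝ} :
    append3 x y t = append3 x' y' t' ↔ x = x' ∧ y = y' ∧ t = t' := by
  simp [append3, funext_iff, Fin.forall_fin_add, and_assoc]

lemma isLatticePoint_append3 {x : Fin m → ℝ} {y : Fin n → ℝ} {t : ℝ} :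
    isLatticePoint (append3 x y t) ↔ isLatticePoint x ∧ isLatticePoint y ∧ ∃ z : ℤ, t = z := by
  simp [isLatticePoint, append3, Fin.forall_fin_add, and_assoc]

end Append3

section JoinMaps

variable (m n : ℕ)

def joinLeft : (Fin m → ℝ) →ₗ[ℝ] (Fin (m + n + 1) → ℝ) where
  toFun x := append3 x 0 0
  map_add' x x' := by simp [append3_add]
  map_smul' r x := by simp [append3_smul]

def joinRightLinear : (Fin n → ℝ) →ₗ[ℝ] (Fin (m + n + 1) → ℝ) where
  toFun y := append3 0 y 0
  map_add' y y' := by simp [append3_add]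
  map_smul' r y := by simp [append3_smul]

def joinRight : (Fin n → ℝ) →ᵃ[ℝ] (Fin (m + n + 1) → ℝ) where
  toFun y := append3 0 y 1
  linear := joinRightLinear m n
  map_vadd' y v := by simp [joinRightLinear, append3_add]

variable {m n}

@[simp] lemma joinLeft_apply (x : Fin m → ℝ) : joinLeft m n x = append3 x 0 0 := rfl

@[simp] lemma joinRightLinear_apply (y : Fin n → ℝ) :
    joinRightLinear m n y = append3 0 y 0 := rfl

@[simp] lemma joinRight_apply (y : Fin n → ℝ) : joinRight m n y = append3 0 y 1 := rfl

lemma joinSet_eq_convexHull (P : Set (Fin m → ℝ)) (Q : Set (Fin n → ℝ)) :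
    joinSet P Q = convexHull ℝ (joinLeft m n '' P ∪ joinRight m n '' Q) := rfl

end JoinMaps

section Join

variable {m n : ℕ} {P : Set (Fin m → ℝ)} {Q : Set (Fin n → ℝ)}

lemma IsLatticePolytope.joinSet (hP : IsLatticePolytope P) (hQ : IsLatticePolytope Q) :
    IsLatticePolytope (joinSet P Q) := by
  classical
  obtain ⟨S, hS, rfl⟩ := hP
  obtain ⟨T, hT, rfl⟩ := hQ
  refine ⟨S.image (joinLeft m n) ∪ T.image (joinRight m n), ?_, ?_⟩
  · simp only [Finset.mem_union, Finset.mem_image]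
    rintro _ (⟨x, hx, rfl⟩ | ⟨y, hy, rfl⟩)
    · exact isLatticePoint_append3.2 ⟨hS x hx, fun _ => ⟨0, by simp⟩, 0, by simp⟩
    · exact isLatticePoint_append3.2 ⟨fun _ => ⟨0, by simp⟩, hT y hy, 1, by simp⟩
  · rw [joinSet_eq_convexHull, LinearMap.image_convexHull, AffineMap.image_convexHull,
      convexHull_convexHull_union_left, convexHull_convexHull_union_right]
    push_cast
    rfl

lemma IsLatticePolytope.convex (hP : IsLatticePolytope P) : Convex ℝ P := by
  obtain ⟨S, -, rfl⟩ := hP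
  exact convex_convexHull ℝ _

lemma mem_joinSet (hPc : Convex ℝ P) (hQc : Convex ℝ Q) (hP : P.Nonempty) (hQ : Q.Nonempty)
    {z : Fin (m + n + 1) → ℝ} :
    z ∈ joinSet P Q ↔ ∃ x ∈ P, ∃ y ∈ Q, ∃ t ∈ Set.Icc (0 : ℝ) 1,
      z = append3 ((1 - t) • x) (t • y) t := by
  rw [joinSet_eq_convexHull, convexHull_union (hP.image _) (hQ.image _),
    (hPc.linear_image _).convexHull_eq, (hQc.affine_image _).convexHull_eq, mem_convexJoin]
  simp [segment_eq_image, append3_smul, append3_add, eq_comm]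

lemma joinLeft_injective : Function.Injective (joinLeft m n) :=
  fun _ _ h => (append3_inj.1 h).1

lemma joinRightLinear_injective : Function.Injective (joinRightLinear m n) :=
  fun _ _ h => (append3_inj.1 h).2.1

open Module in
lemma polyDim_joinSet (hP : P.Nonempty) (hQ : Q.Nonempty) :
    polyDim (joinSet P Q) = polyDim P + polyDim Q + 1 := by
  obtain ⟨x₀, hx₀⟩ := hP
  obtain ⟨y₀, hy₀⟩ := hQ
  set s₁ := (affineSpan ℝ P).map (joinLeft m n).toAffineMap
  set s₂ := (affineSpan ℝ Q).map (joinRight m n)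
  have hdir₁ : s₁.direction = (affineSpan ℝ P).direction.map (joinLeft m n) :=
    AffineSubspace.map_direction _ _
  have hdir₂ : s₂.direction = (affineSpan ℝ Q).direction.map (joinRightLinear m n) :=
    AffineSubspace.map_direction _ _
  have hdisj : Disjoint (s₁ : Set (Fin (m + n + 1) → ℝ)) s₂ := by
    rw [Set.disjoint_left]
    rintro _ ⟨x, -, rfl⟩ ⟨y, -, hxy⟩
    simpa using congrFun hxy (Fin.last _)
  have hdisj_dir : Disjoint s₁.direction s₂.direction := by
    rw [hdir₁, hdir₂, Submodule.disjoint_def]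
    rintro _ ⟨x, -, rfl⟩ ⟨y, -, hxy⟩
    simp [(append3_inj.1 hxy).1.symm]
  have hspan : affineSpan ℝ (joinSet P Q) = s₁ ⊔ s₂ := by
    rw [joinSet_eq_convexHull, affineSpan_convexHull, AffineSubspace.span_union,
      ← LinearMap.coe_toAffineMap, ← AffineSubspace.map_span, ← AffineSubspace.map_span]
  have hne₁ : (s₁ : Set (Fin (m + n + 1) → ℝ)).Nonempty := ⟨_, x₀, mem_affineSpan ℝ hx₀, rfl⟩
  have hne₂ : (s₂ : Set (Fin (m + n + 1) → ℝ)).Nonempty := ⟨_, y₀, mem_affineSpan ℝ hy₀, rfl⟩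
  rw [polyDim, hspan,
    AffineSubspace.finrank_direction_sup_of_disjoint hne₁ hne₂ hdisj hdisj_dir, hdir₁, hdir₂,
    ← (Submodule.equivMapOfInjective _ joinLeft_injective _).finrank_eq,
    ← (Submodule.equivMapOfInjective _ joinRightLinear_injective _).finrank_eq, polyDim, polyDim]

lemma dilate_eq_smul (hP : P.Nonempty) (k : ℕ) : dilate k P = (k : ℝ) • P := by
  rcases eq_or_ne k 0 with rfl | hk
  · simp [dilate, Set.zero_smul_set hP, Set.singleton_zero]
  · exact if_neg hk

lemma joinSet_nonempty (hP : P.Nonempty) : (joinSet P Q).Nonempty :=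
  (hP.image (joinLeft m n)).mono (Set.subset_union_left.trans (subset_convexHull ℝ _))

lemma mem_smul_joinSet (hPc : Convex ℝ P) (hQc : Convex ℝ Q) (hP : P.Nonempty)
    (hQ : Q.Nonempty) {r : ℝ} (hr : 0 ≤ r) {z : Fin (m + n + 1) → ℝ} :
    z ∈ r • joinSet P Q ↔ ∃ x ∈ P, ∃ y ∈ Q, ∃ t ∈ Set.Icc 0 r,
      z = append3 ((r - t) • x) (t • y) t := by
  rcases hr.eq_or_lt with rfl | hr
  · obtain ⟨x, hx⟩ := hP
    obtain ⟨y, hy⟩ := hQ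
    simp only [Set.zero_smul_set (joinSet_nonempty ⟨x, hx⟩), Set.mem_zero, Set.Icc_self,
      Set.mem_singleton_iff, exists_eq_left, sub_zero, zero_smul, append3_zero]
    exact ⟨fun h => ⟨x, hx, y, hy, h⟩, fun ⟨_, _, _, _, h⟩ => h⟩
  simp_rw [Set.mem_smul_set, mem_joinSet hPc hQc hP hQ]
  constructor
  · rintro ⟨_, ⟨x, hx, y, hy, t, ⟨ht0, ht1⟩, rfl⟩, rfl⟩
    refine ⟨x, hx, y, hy, r * t, ⟨by positivity, by nlinarith⟩, ?_⟩
    rw [append3_smul, smul_smul, smul_smul, mul_one_sub]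
  · rintro ⟨x, hx, y, hy, t, ⟨ht0, htr⟩, rfl⟩
    refine ⟨_, ⟨x, hx, y, hy, t / r, ⟨by positivity, (div_le_one hr).2 htr⟩, rfl⟩, ?_⟩
    rw [append3_smul, smul_smul, smul_smul, mul_one_sub, mul_div_cancel₀ _ hr.ne']

open Finset in
lemma dilate_joinSet_inter_latticeSet (hPc : Convex ℝ P) (hQc : Convex ℝ Q) (hP : P.Nonempty)
    (hQ : Q.Nonempty) (k : ℕ) :
    dilate k (joinSet P Q) ∩ latticeSet (m + n + 1) =
      ⋃ ij ∈ antidiagonal k,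
        (fun ab : (Fin m → ℝ) × (Fin n → ℝ) => append3 ab.1 ab.2 ij.2) ''
          ((dilate ij.1 P ∩ latticeSet m) ×ˢ (dilate ij.2 Q ∩ latticeSet n)) := by
  ext z
  simp only [dilate_eq_smul (joinSet_nonempty hP), dilate_eq_smul hP, dilate_eq_smul hQ,
    Set.mem_inter_iff, mem_smul_joinSet hPc hQc hP hQ (Nat.cast_nonneg k), Set.mem_iUnion,
    Set.mem_image, Set.mem_prod, HasAntidiagonal.mem_antidiagonal, mem_latticeSet, Prod.exists,
    exists_prop]
  constructor
  · rintro ⟨⟨x, hx, y, hy, t, ⟨ht0, htk⟩, rfl⟩, hz⟩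
    obtain ⟨ha, hb, j, rfl⟩ := isLatticePoint_append3.1 hz
    lift j to ℕ using (by exact_mod_cast ht0)
    have hjk : j ≤ k := by exact_mod_cast htk
    refine ⟨k - j, j, by omega, _, _, ⟨⟨?_, ha⟩, Set.smul_mem_smul_set hy, hb⟩, rfl⟩
    rw [Nat.cast_sub hjk]
    exact Set.smul_mem_smul_set hx
  · rintro ⟨i, j, rfl, _, _, ⟨⟨⟨x, hx, rfl⟩, ha⟩, ⟨y, hy, rfl⟩, hb⟩, rfl⟩
    refine ⟨⟨x, hx, y, hy, j, ⟨j.cast_nonneg, by simp⟩, by push_cast; ring_nf⟩,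
      isLatticePoint_append3.2 ⟨ha, hb, j, rfl⟩⟩

lemma latticeSet_eq_span (n : ℕ) :
    latticeSet n = Submodule.span ℤ (Set.range (Pi.basisFun ℝ (Fin n))) := by
  ext x
  simp [Module.Basis.mem_span_iff_repr_mem, mem_latticeSet, isLatticePoint, eq_comm]

lemma IsLatticePolytope.finite_dilate_inter_latticeSet (hP : IsLatticePolytope P) (k : ℕ) :
    (dilate k P ∩ latticeSet m).Finite := by
  obtain ⟨S, -, rfl⟩ := hP
  have hS : Bornology.IsBounded (convexHull ℝ (S : Set (Fin m → ℝ))) :=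
    isBounded_convexHull.2 S.finite_toSet.isBounded
  rw [latticeSet_eq_span]
  refine ZSpan.setFinite_inter _ ?_
  unfold dilate
  split_ifs
  exacts [Bornology.isBounded_singleton, hS.smul₀ _]

open Finset in
lemma ehrhart_joinSet (hP : IsLatticePolytope P) (hQ : IsLatticePolytope Q) (hPne : P.Nonempty)
    (hQne : Q.Nonempty) (k : ℕ) :
    ehrhart (joinSet P Q) k = ∑ ij ∈ antidiagonal k, ehrhart P ij.1 * ehrhart Q ij.2 := by
  have hdisj : (antidiagonal k : Set (ℕ × ℕ)).PairwiseDisjoint fun ij =>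
      (fun ab : (Fin m → ℝ) × (Fin n → ℝ) => append3 ab.1 ab.2 ij.2) ''
        ((dilate ij.1 P ∩ latticeSet m) ×ˢ (dilate ij.2 Q ∩ latticeSet n)) := by
    rintro ⟨i, j⟩ hij ⟨i', j'⟩ hij' hne
    rw [Function.onFun, Set.disjoint_left]
    rintro _ ⟨ab, -, rfl⟩ ⟨ab', -, h⟩
    have hj : j' = j := by exact_mod_cast (append3_inj.1 h).2.2
    rw [mem_coe, HasAntidiagonal.mem_antidiagonal] at hij hij'
    exact hne (Prod.ext (by simp only; omega) hj.symm)
  rw [ehrhart, dilate_joinSet_inter_latticeSet hP.convex hQ.convex hPne hQne, ← set_biUnion_coe,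
    Set.Finite.ncard_biUnion (antidiagonal k).finite_toSet
      (fun ij _ => ((hP.finite_dilate_inter_latticeSet _).prod
        (hQ.finite_dilate_inter_latticeSet _)).image _) hdisj, finsum_mem_coe_finset]
  refine sum_congr rfl fun ij _ => ?_
  rw [Set.ncard_image_of_injective _ fun ab ab' h => Prod.ext (append3_inj.1 h).1
    (append3_inj.1 h).2.1, Set.ncard_prod]
  rfl

lemma ehrhart_zero (P : Set (Fin n → ℝ)) : ehrhart P 0 = 1 := by
  simp [ehrhart, dilate, Set.singleton_inter_of_mem (show (0 : Fin n → ℝ) ∈ latticeSet n from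
    fun _ => ⟨0, by simp⟩)]

-- The Ehrhart series of `∅` is `1`, and `(1 - t) * 1` has a nonzero coefficient above degree
-- `dim ∅ = 0`.
lemma IsHStar.nonempty {h : ℕ → ℤ} (hh : IsHStar P h) : P.Nonempty := by
  rw [Set.nonempty_iff_ne_empty]
  rintro rfl
  have hdim : polyDim (∅ : Set (Fin m → ℝ)) = 0 := by simp [polyDim]
  have hseries : PowerSeries.mk (fun k => (ehrhart (∅ : Set (Fin m → ℝ)) k : ℤ)) = 1 := by
    ext (_ | k)
    · simp [ehrhart_zero]
    · simp [ehrhart, dilate]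
  have h1 := congrArg (PowerSeries.coeff 1) hh.2
  rw [PowerSeries.coeff_mk, hh.1 1 (by simp [hdim]), hdim, hseries] at h1
  simp at h1

lemma mk_ehrhart_joinSet (hP : IsLatticePolytope P) (hQ : IsLatticePolytope Q)
    (hPne : P.Nonempty) (hQne : Q.Nonempty) :
    PowerSeries.mk (fun k => (ehrhart (joinSet P Q) k : ℤ)) =
      PowerSeries.mk (fun k => (ehrhart P k : ℤ)) *
        PowerSeries.mk (fun k => (ehrhart Q k : ℤ)) := by
  ext k
  simp [PowerSeries.coeff_mul, ehrhart_joinSet hP hQ hPne hQne]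

end Join

/-- The join of two lattice polytopes is a lattice polytope of dimension
`dim P + dim Q + 1` whose `h^*`-polynomial is the product `h^*_P(t) · h^*_Q(t)`. -/
theorem stmt_10 {m n : ℕ} (P : Set (Fin m → ℝ)) (Q : Set (Fin n → ℝ))
    (hP : IsLatticePolytope P) (hQ : IsLatticePolytope Q)
    (hp hq : ℕ → ℤ) (hhp : IsHStar P hp) (hhq : IsHStar Q hq) :
    IsLatticePolytope (joinSet P Q) ∧
    polyDim (joinSet P Q) = polyDim P + polyDim Q + 1 ∧
    IsHStar (joinSet P Q) (fun i => ∑ j ∈ Finset.range (i + 1), hp j * hq (i - j)) := by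
  have hdim := polyDim_joinSet hhp.nonempty hhq.nonempty
  refine ⟨hP.joinSet hQ, hdim, fun i hi => Finset.sum_eq_zero fun j hj => ?_, ?_⟩
  · rw [Finset.mem_range] at hj
    rcases lt_or_ge (polyDim P) j with hjP | hjP
    · rw [hhp.1 j hjP, zero_mul]
    · rw [hhq.1 (i - j) (by omega), mul_zero]
  · rw [hdim, show polyDim P + polyDim Q + 1 + 1 = (polyDim P + 1) + (polyDim Q + 1) by ring,
      pow_add, mk_ehrhart_joinSet hP hQ hhp.nonempty hhq.nonempty, mul_mul_mul_comm, hhp.2, hhq.2]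
    ext i
    simp [PowerSeries.coeff_mul, Finset.Nat.sum_antidiagonal_eq_sum_range_succ_mk]
end

section
/- For every pair of positive integers s ≥ 1 and b ≥ 1, there exists a (2s−1)-dimensional lattice simplex Δ_{s,b} ⊂ ℝ^{2s−1} (a lattice polytope with exactly 2s vertices that are affinely independent) whose h*-polynomial equals 1 + b·t^s. -/
open scoped Pointwise

/-!
The simplex is `Δ = conv(0, e_j (j ≠ L), v)` with `v_L = b + 1`, `v_j = 1` for `j ∈ B` and
`v_j = b` otherwise, where `L ∉ B` and `n = 2 * #B + 1`. The cone over `Δ` has `b + 1` lattice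
points in its half-open fundamental parallelepiped: the origin, and `b` further points all at
height `#B + 1`. Every lattice point of `k • Δ` is uniquely such a box point plus a nonnegative
integer combination of the vertices, which gives
`|k • Δ ∩ ℤⁿ| = C(n + k, n) + b * C(n + k - (#B + 1), n)`, i.e. `h* = 1 + b t^(#B + 1)`.
-/

open Finset

def sumLe (m N : ℕ) : Finset (Fin m → ℕ) :=
  (Fintype.piFinset fun _ => range (N + 1)).filter fun f => ∑ i, f i ≤ N

@[simp]
lemma mem_sumLe {m N : ℕ} {f : Fin m → ℕ} : f ∈ sumLe m N ↔ ∑ i, f i ≤ N := by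
  simp only [sumLe, mem_filter, Fintype.mem_piFinset, mem_range, and_iff_right_iff_imp]
  intro h i
  have := single_le_sum (fun j _ => Nat.zero_le (f j)) (mem_univ i)
  omega

lemma card_sumLe (m N : ℕ) : #(sumLe m N) = (m + N).choose m := by
  induction m generalizing N with
  | zero => simp [sumLe]
  | succ m ih =>
    calc #(sumLe (m + 1) N) = #((range (N + 1)).sigma fun j => sumLe m (N - j)) := by
          refine card_nbij' (fun f => ⟨f 0, Fin.tail f⟩) (fun p => Fin.cons p.1 p.2)
            (fun f hf => ?_) (fun p hp => ?_) (fun f _ => by simp) (fun p _ => by simp)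
          · simp only [coe_sigma, Set.mem_sigma_iff, coe_range, Set.mem_Iio, mem_coe,
              mem_sumLe, Fin.sum_univ_succ] at hf ⊢
            exact ⟨by omega, by simp only [Fin.tail]; omega⟩
          · simp only [coe_sigma, Set.mem_sigma_iff, coe_range, Set.mem_Iio, mem_coe,
              mem_sumLe, Fin.sum_cons] at hp ⊢
            omega
      _ = ∑ j ∈ range (N + 1), (N - j + m).choose m := by simp [card_sigma, ih, add_comm]
      _ = ∑ j ∈ range (N + 1), (j + m).choose m := by
          rw [← sum_range_reflect]
          refine sum_congr rfl fun j hj => ?_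
          rw [mem_range] at hj
          congr 2
          omega
      _ = (m + 1 + N).choose (m + 1) := by rw [Nat.sum_range_add_choose]; ring_nf

lemma card_filter_add_sum_le (m N s : ℕ) :
    #((sumLe m N).filter fun f => s + ∑ i, f i ≤ N) =
      if s ≤ N then (m + (N - s)).choose m else 0 := by
  split_ifs with hs
  · rw [← card_sumLe]
    congr 1
    ext f
    simp only [mem_filter, mem_sumLe]
    omega
  · rw [card_eq_zero, filter_eq_empty_iff]
    intro f _
    omega

lemma sum_ite_mem_const {ι : Type*} [Fintype ι] [DecidableEq ι] (B : Finset ι) (c d : ℕ) :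
    ∑ j, (if j ∈ B then c else d) = #B * c + (Fintype.card ι - #B) * d := by
  rw [sum_ite, filter_mem_eq_inter, univ_inter, sum_const, sum_const, smul_eq_mul, smul_eq_mul,
    filter_not, filter_mem_eq_inter, univ_inter, card_sdiff, card_univ, inter_univ]

lemma succ_mul_add_le_succ_mul_iff {b q r Y : ℕ} (hr : r ≤ b) :
    (b + 1) * q + r ≤ (b + 1) * Y ↔ q + (if r = 0 then 0 else 1) ≤ Y := by
  split_ifs with hr0
  · subst hr0
    simp
  · constructor
    · intro h
      by_contra! h'
      nlinarith [Nat.mul_le_mul_left (b + 1) (Nat.lt_succ_iff.mp h'), Nat.pos_of_ne_zero hr0]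
    · intro h
      nlinarith

lemma mul_succ_mul_add_le_succ_mul_iff {b q r Y : ℕ} (hr : r ≤ b) :
    b * ((b + 1) * q + r) ≤ (b + 1) * Y ↔ q * b + r ≤ Y := by
  constructor
  · intro h
    by_contra! h'
    nlinarith
  · intro h
    nlinarith

lemma eq_and_eq_of_succ_mul_add_eq {b q q' r r' : ℕ} (hr : r ≤ b) (hr' : r' ≤ b)
    (h : (b + 1) * q + r = (b + 1) * q' + r') : q = q' ∧ r = r' := by
  have key : ∀ q r, r ≤ b → ((b + 1) * q + r) / (b + 1) = q ∧ ((b + 1) * q + r) % (b + 1) = r :=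
    fun q r hr => (Nat.div_mod_unique b.succ_pos).2 ⟨add_comm _ _, Nat.lt_succ_of_le hr⟩
  obtain ⟨h₁, h₂⟩ := key q r hr
  obtain ⟨h₃, h₄⟩ := key q' r' hr'
  rw [h] at h₁ h₂
  exact ⟨h₁.symm.trans h₃, h₂.symm.trans h₄⟩

lemma isLatticePoint.exists_natCast {n : ℕ} {x : Fin n → ℝ} (hx : isLatticePoint x)
    (h0 : 0 ≤ x) : ∃ y : Fin n → ℕ, x = Nat.cast ∘ y := by
  choose z hz using hx
  refine ⟨fun j => (z j).toNat, funext fun j => ?_⟩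
  have hzj : 0 ≤ z j := by
    have : (0 : ℝ) ≤ x j := h0 j
    rw [hz j] at this
    exact_mod_cast this
  rw [Function.comp_apply, hz j]
  exact_mod_cast (Int.toNat_of_nonneg hzj).symm

lemma polyDim_convexHull_of_affineIndependent {n d : ℕ} {V : Finset (Fin n → ℝ)}
    (hV : AffineIndependent ℝ (Subtype.val : {x // x ∈ V} → (Fin n → ℝ))) (hcard : #V = d + 1) :
    polyDim (convexHull ℝ (V : Set (Fin n → ℝ))) = d := by
  rw [polyDim, affineSpan_convexHull, direction_affineSpan]
  have := hV.finrank_vectorSpan (by simpa using hcard)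
  rw [Subtype.range_coe_subtype] at this
  exact this

lemma affineIndependent_insert_zero_range {ι E : Type*} [AddCommGroup E] [Module ℝ E]
    {u : ι → E} (hu : LinearIndependent ℝ u) :
    AffineIndependent ℝ (fun p => p : ↥(insert 0 (Set.range u)) → E) := by
  have h := (linearIndependent_set_iff_affineIndependent_vadd_union_singleton ℝ
    (fun v hv => ?_) (0 : E)).1 hu.linearIndepOn_id
  · rwa [Set.singleton_union, show (· +ᵥ (0 : E)) '' Set.range u = Set.range u by simp] at h
  · obtain ⟨i, rfl⟩ := hv
    exact hu.ne_zero i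

lemma convexHull_insert_zero_range_map_single {ι E : Type*} [Fintype ι] [DecidableEq ι]
    [AddCommGroup E] [Module ℝ E] (T : (ι → ℝ) →ₗ[ℝ] E) :
    convexHull ℝ (insert 0 (Set.range fun i => T (Pi.single i 1))) =
      T '' {w | 0 ≤ w ∧ ∑ i, w i ≤ 1} := by
  apply subset_antisymm
  · refine convexHull_min ?_ ((convex_Ici 0 |>.inter ?_).linear_image T)
    · rintro _ (rfl | ⟨i, rfl⟩)
      · exact ⟨0, by simp, map_zero T⟩
      · refine ⟨Pi.single i 1, ⟨fun j => ?_, by simp⟩, rfl⟩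
        by_cases h : j = i <;> simp [h]
    · exact convex_halfSpace_le (f := fun w : ι → ℝ => ∑ i, w i)
        ⟨fun _ _ => sum_add_distrib, fun _ _ => (mul_sum _ _ _).symm⟩ 1
  · rintro _ ⟨w, ⟨hw0, hw1⟩, rfl⟩
    refine mem_convexHull_of_exists_fintype (ι := Option ι) (Option.elim · (1 - ∑ i, w i) w)
      (Option.elim · 0 fun i => T (Pi.single i 1)) ?_ ?_ ?_ ?_
    · rintro (_ | i)
      · simpa using hw1
      · exact hw0 i
    · simp [Fintype.sum_option]
    · rintro (_ | i)
      · exact Set.mem_insert _ _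
      · exact Set.mem_insert_of_mem _ ⟨i, rfl⟩
    · simp only [Fintype.sum_option, Option.elim, smul_zero, zero_add]
      simp_rw [← map_smul, ← map_sum, ← Pi.single_smul', smul_eq_mul, mul_one,
        univ_sum_single]

lemma dilate_image_setOf_nonneg_sum_le {ι : Type*} [Fintype ι] {n : ℕ} (T : (ι → ℝ) →ₗ[ℝ] (Fin n → ℝ))
    (k : ℕ) : dilate k (T '' {w | 0 ≤ w ∧ ∑ i, w i ≤ 1}) = T '' {w | 0 ≤ w ∧ ∑ i, w i ≤ k} := by
  rcases Nat.eq_zero_or_pos k with rfl | hk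
  · have : {w : ι → ℝ | 0 ≤ w ∧ ∑ i, w i ≤ ((0 : ℕ) : ℝ)} = {0} := by
      ext w
      simp only [Set.mem_ofPred_eq, Nat.cast_zero, Set.mem_singleton_iff]
      refine ⟨fun ⟨hw0, hw⟩ => ?_, by rintro rfl; simp⟩
      exact funext ((sum_eq_zero_iff_of_nonneg fun i _ => hw0 i).1
        (le_antisymm hw (sum_nonneg fun i _ => hw0 i)) · (mem_univ _))
    rw [this, Set.image_singleton, map_zero, dilate, if_pos rfl]
  · rw [dilate, if_neg hk.ne', ← image_smul_set]
    congr 1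
    ext w
    simp only [Set.mem_smul_set_iff_inv_smul_mem₀ (by positivity : (k : ℝ) ≠ 0),
      Set.mem_ofPred_eq, Pi.smul_apply, smul_eq_mul, ← mul_sum]
    rw [inv_mul_le_iff₀ (by positivity), mul_one,
      smul_nonneg_iff_nonneg_of_pos_left (inv_pos.2 (by positivity))]

lemma isHStar_of_ehrhart_series {n d : ℕ} {P : Set (Fin n → ℝ)} {h : ℕ → ℤ}
    (hP : polyDim P = d) (hh : ∀ i, d < i → h i = 0)
    (he : PowerSeries.mk (fun k => (ehrhart P k : ℤ)) =
      PowerSeries.mk h * PowerSeries.mk fun k => ((d + k).choose d : ℤ)) :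
    IsHStar P h := by
  subst hP
  refine ⟨hh, ?_⟩
  rw [he, mul_left_comm, mul_comm _ (PowerSeries.mk fun _ => _),
    PowerSeries.mk_add_choose_mul_one_sub_pow_eq_one, mul_one]

open PowerSeries in
lemma mk_one_add_mul_X_pow_mul (b : ℕ) {s : ℕ} (hs : s ≠ 0) (c : ℕ → ℤ) :
    PowerSeries.mk (fun i => if i = 0 then 1 else if i = s then (b : ℤ) else 0) *
        PowerSeries.mk c =
      PowerSeries.mk fun k => c k + b * if s ≤ k then c (k - s) else 0 := by
  have : PowerSeries.mk (fun i => if i = 0 then 1 else if i = s then (b : ℤ) else 0) =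
      1 + C (b : ℤ) * X ^ s := by
    ext i
    rw [coeff_mk, map_add, coeff_one, coeff_C_mul, coeff_X_pow]
    split_ifs <;> omega
  ext k
  rw [this, add_mul, one_mul, mul_assoc, map_add, coeff_C_mul, coeff_X_pow_mul']
  simp only [coeff_mk]

section Construction

variable (b : ℕ) {n : ℕ} (L : Fin n) (B : Finset (Fin n))

def weight (j : Fin n) : ℕ := if j ∈ B then 1 else b

/-- Fixes `e_j` for `j ≠ L` and sends `e_L` to the apex `e_L + weight`, whose `L`-th coordinate
is `b + 1` when `L ∉ B`. -/
def apexMap : (Fin n → ℝ) →ₗ[ℝ] (Fin n → ℝ) :=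
  LinearMap.id + (LinearMap.proj L).smulRight fun j => (weight b B j : ℝ)

noncomputable def simplexVertices : Finset (Fin n → ℝ) :=
  insert 0 (univ.image fun i => apexMap b L B (Pi.single i 1))

/-- The lattice points of the half-open fundamental parallelepiped of the cone over the simplex:
the `r`-th one has barycentric coordinates `r / (b + 1)` off `B` and `1 - r / (b + 1)` on `B`
(for `r ≠ 0`), hence height `#B + 1` when `n = 2 * #B + 1`. -/
def boxPoint (r : ℕ) (j : Fin n) : ℕ := if j ∈ B then (if r = 0 then 0 else 1) else r

/-- `apexMap f + boxPoint r`, computed in `ℕⁿ`. -/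
def liftPoint (r : ℕ) (f : Fin n → ℕ) (j : Fin n) : ℕ :=
  f j + (f L * weight b B j + boxPoint B r j)

/-- Says that `y` lies in the `k`-th dilate: the coordinates `y - (y L / (b + 1)) • weight` of `y`
with respect to the vertices `apexMap (e_i)` are nonnegative and sum to at most `k`. -/
def InDilate (k : ℕ) (y : Fin n → ℕ) : Prop :=
  (∀ j, weight b B j * y L ≤ (b + 1) * y j) ∧
    (b + 1) * ∑ j, y j ≤ (b + 1) * k + (∑ j, weight b B j) * y L

def liftDomain (k : ℕ) : Finset ((_ : ℕ) × (Fin n → ℕ)) :=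
  (range (b + 1)).sigma fun r => (sumLe n k).filter fun f =>
    (if r = 0 then 0 else #B + 1) + ∑ j, f j ≤ k

variable {b L B}

lemma weight_of_notMem (hLB : L ∉ B) : weight b B L = b := if_neg hLB

lemma apexMap_apply (w : Fin n → ℝ) (j : Fin n) :
    apexMap b L B w j = w j + w L * weight b B j := by
  simp [apexMap]

lemma apexMap_injective (hLB : L ∉ B) : Function.Injective (apexMap b L B) := by
  refine (injective_iff_map_eq_zero _).2 fun w hw => ?_
  have hL : w L = 0 := by
    have := congrFun hw L
    rw [apexMap_apply, weight_of_notMem hLB, Pi.zero_apply] at this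
    nlinarith [(by positivity : (0 : ℝ) ≤ b)]
  funext j
  simpa [apexMap_apply, hL] using congrFun hw j

lemma linearIndependent_apexMap_single (hLB : L ∉ B) :
    LinearIndependent ℝ fun i => apexMap b L B (Pi.single i 1) :=
  (Pi.linearIndependent_single_one (Fin n) ℝ).map' _
    (LinearMap.ker_eq_bot.2 (apexMap_injective hLB))

lemma coe_simplexVertices :
    (simplexVertices b L B : Set (Fin n → ℝ)) =
      insert 0 (Set.range fun i => apexMap b L B (Pi.single i 1)) := by
  simp [simplexVertices]

lemma card_simplexVertices (hLB : L ∉ B) : #(simplexVertices b L B) = n + 1 := by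
  have hli := linearIndependent_apexMap_single (b := b) hLB
  rw [simplexVertices, card_insert_of_notMem, card_image_of_injective _ hli.injective,
    card_univ, Fintype.card_fin]
  simpa using hli.ne_zero

lemma isLatticePoint_of_mem_simplexVertices {x : Fin n → ℝ} (hx : x ∈ simplexVertices b L B) :
    isLatticePoint x := by
  rw [simplexVertices, mem_insert, mem_image] at hx
  rcases hx with rfl | ⟨i, -, rfl⟩ <;> intro j
  · exact ⟨0, by simp⟩
  · refine ⟨((Pi.single i 1 : Fin n → ℕ) j + (Pi.single i 1 : Fin n → ℕ) L * weight b B j : ℕ), ?_⟩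
    simp only [apexMap_apply, Pi.single_apply]
    split_ifs <;> simp

lemma affineIndependent_simplexVertices (hLB : L ∉ B) :
    AffineIndependent ℝ (Subtype.val : {x // x ∈ simplexVertices b L B} → (Fin n → ℝ)) := by
  have := affineIndependent_insert_zero_range (linearIndependent_apexMap_single (b := b) hLB)
  rwa [← coe_simplexVertices] at this

lemma dilate_convexHull_simplexVertices (k : ℕ) :
    dilate k (convexHull ℝ (simplexVertices b L B : Set (Fin n → ℝ))) =
      apexMap b L B '' {w | 0 ≤ w ∧ ∑ i, w i ≤ k} := by
  rw [coe_simplexVertices, convexHull_insert_zero_range_map_single, dilate_image_setOf_nonneg_sum_le]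

lemma natCast_mem_apexMap_image_iff (hLB : L ∉ B) (k : ℕ) (y : Fin n → ℕ) :
    Nat.cast ∘ y ∈ apexMap b L B '' {w | 0 ≤ w ∧ ∑ i, w i ≤ k} ↔ InDilate b L B k y := by
  simp only [InDilate, Set.mem_image, Set.mem_ofPred_eq, funext_iff, apexMap_apply,
    Function.comp_apply]
  constructor
  · rintro ⟨w, ⟨hw0, hwk⟩, hy⟩
    have hyL : (y L : ℝ) = (b + 1) * w L := by rw [← hy, weight_of_notMem hLB]; ring
    have hw0L : 0 ≤ w L := hw0 L
    refine ⟨fun j => ?_, ?_⟩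
    · have hwj : 0 ≤ w j := hw0 j
      have : (weight b B j * y L : ℝ) ≤ (b + 1) * y j := by rw [hyL, ← hy j]; nlinarith
      exact_mod_cast this
    · have hsum : ∑ j, (y j : ℝ) = ∑ j, w j + w L * ∑ j, (weight b B j : ℝ) := by
        simp only [← hy, sum_add_distrib, mul_sum]
      have : (b + 1) * ∑ j, (y j : ℝ) ≤ (b + 1) * k + (∑ j, (weight b B j : ℝ)) * y L := by
        rw [hsum, hyL]; nlinarith
      exact_mod_cast this
  · rintro ⟨h1, h2⟩
    have hb : (0 : ℝ) < b + 1 := by positivity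
    have h1' : ∀ j, (weight b B j * y L : ℝ) ≤ (b + 1) * y j := fun j => by exact_mod_cast h1 j
    have h2' : (b + 1) * ∑ j, (y j : ℝ) ≤ (b + 1) * k + (∑ j, (weight b B j : ℝ)) * y L := by
      exact_mod_cast h2
    refine ⟨fun j => y j - y L / (b + 1) * weight b B j, ⟨fun j => ?_, ?_⟩, fun j => ?_⟩
    · rw [Pi.zero_apply, sub_nonneg, div_mul_eq_mul_div, div_le_iff₀ hb]
      linarith [h1' j]
    · calc ∑ j, ((y j : ℝ) - y L / (b + 1) * weight b B j)
          = ((b + 1) * ∑ j, (y j : ℝ) - (∑ j, (weight b B j : ℝ)) * y L) / (b + 1) := by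
            rw [sum_sub_distrib, ← mul_sum]
            field_simp
        _ ≤ k := by rw [div_le_iff₀ hb]; linarith
    · simp only [weight_of_notMem hLB]
      field_simp
      ring

lemma dilate_inter_latticeSet (hLB : L ∉ B) (k : ℕ) :
    dilate k (convexHull ℝ (simplexVertices b L B : Set (Fin n → ℝ))) ∩ latticeSet n =
      (Nat.cast ∘ ·) '' {y | InDilate b L B k y} := by
  rw [dilate_convexHull_simplexVertices]
  ext x
  constructor
  · rintro ⟨hx, hlat⟩
    obtain ⟨w, ⟨hw0, -⟩, rfl⟩ := id hx
    have h0 : 0 ≤ apexMap b L B w := fun j => by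
      rw [apexMap_apply]
      exact add_nonneg (hw0 j) (mul_nonneg (hw0 L) (Nat.cast_nonneg _))
    obtain ⟨y, hy⟩ := hlat.exists_natCast h0
    exact ⟨y, (natCast_mem_apexMap_image_iff hLB k y).1 (hy ▸ hx), hy.symm⟩
  · rintro ⟨y, hy, rfl⟩
    exact ⟨(natCast_mem_apexMap_image_iff hLB k y).2 hy, fun j => ⟨y j, rfl⟩⟩

/-- That is, `q * weight j + boxPoint r j = ⌈weight j * m / (b + 1)⌉` for `m = (b + 1) * q + r`. -/
lemma weight_mul_le_iff {r : ℕ} (hr : r ≤ b) (j : Fin n) (q Y : ℕ) :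
    weight b B j * ((b + 1) * q + r) ≤ (b + 1) * Y ↔ q * weight b B j + boxPoint B r j ≤ Y := by
  by_cases hj : j ∈ B
  · simpa only [weight, boxPoint, if_pos hj, one_mul, mul_one] using succ_mul_add_le_succ_mul_iff hr
  · simpa only [weight, boxPoint, if_neg hj] using mul_succ_mul_add_le_succ_mul_iff hr

lemma liftPoint_apply_of_notMem (hLB : L ∉ B) (r : ℕ) (f : Fin n → ℕ) :
    liftPoint b L B r f L = (b + 1) * f L + r := by
  rw [liftPoint, weight_of_notMem hLB, boxPoint, if_neg hLB]
  ring

lemma sum_liftPoint_le_iff (hn : n = 2 * #B + 1) {r : ℕ} (hr : r ≤ b) (f : Fin n → ℕ) (k : ℕ) :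
    (b + 1) * ∑ j, liftPoint b L B r f j ≤
        (b + 1) * k + (∑ j, weight b B j) * ((b + 1) * f L + r) ↔
      (if r = 0 then 0 else #B + 1) + ∑ j, f j ≤ k := by
  have hw : ∑ j, weight b B j = #B + (#B + 1) * b := by
    simp only [weight]
    rw [sum_ite_mem_const, Fintype.card_fin, show n - #B = #B + 1 by omega, mul_one]
  have hbox : ∑ j, boxPoint B r j = #B * (if r = 0 then 0 else 1) + (#B + 1) * r := by
    simp only [boxPoint]
    rw [sum_ite_mem_const, Fintype.card_fin, show n - #B = #B + 1 by omega]
  have hlift : ∑ j, liftPoint b L B r f j =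
      ∑ j, f j + f L * ∑ j, weight b B j + ∑ j, boxPoint B r j := by
    simp only [liftPoint, sum_add_distrib, mul_sum, add_assoc]
  rw [hlift, hw, hbox]
  calc _ ↔ (b + 1) * (∑ j, f j + #B * (if r = 0 then 0 else 1)) + r ≤ (b + 1) * k := by
        constructor <;> intro h <;> nlinarith
    _ ↔ _ := by
        rw [succ_mul_add_le_succ_mul_iff hr]
        split_ifs <;> omega

lemma inDilate_liftPoint_iff (hLB : L ∉ B) (hn : n = 2 * #B + 1) {r : ℕ} (hr : r ≤ b)
    (f : Fin n → ℕ) (k : ℕ) :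
    InDilate b L B k (liftPoint b L B r f) ↔ (if r = 0 then 0 else #B + 1) + ∑ j, f j ≤ k := by
  rw [InDilate, liftPoint_apply_of_notMem hLB, sum_liftPoint_le_iff hn hr, and_iff_right_iff_imp]
  exact fun _ j => (weight_mul_le_iff hr j _ _).2 (Nat.le_add_left _ _)

lemma exists_liftPoint_eq (hLB : L ∉ B) {y : Fin n → ℕ}
    (hy : ∀ j, weight b B j * y L ≤ (b + 1) * y j) :
    ∃ r ≤ b, ∃ f, liftPoint b L B r f = y := by
  set q := y L / (b + 1)
  set r := y L % (b + 1)
  have hyL : (b + 1) * q + r = y L := Nat.div_add_mod _ _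
  have hr : r ≤ b := Nat.lt_succ_iff.mp (Nat.mod_lt _ b.succ_pos)
  have hle : ∀ j, q * weight b B j + boxPoint B r j ≤ y j := fun j =>
    (weight_mul_le_iff hr j q (y j)).1 (hyL ▸ hy j)
  refine ⟨r, hr, fun j => y j - (q * weight b B j + boxPoint B r j), ?_⟩
  have hfL : y L - (q * weight b B L + boxPoint B r L) = q := by
    rw [weight_of_notMem hLB, boxPoint, if_neg hLB, ← hyL]
    rw [show (b + 1) * q + r = q + (q * b + r) by ring, Nat.add_sub_cancel]
  funext j
  rw [liftPoint, hfL, Nat.sub_add_cancel (hle j)]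

lemma liftPoint_injOn (hLB : L ∉ B) :
    Set.InjOn (fun p : (_ : ℕ) × (Fin n → ℕ) => liftPoint b L B p.1 p.2)
      {p | p.1 ≤ b} := by
  rintro ⟨r, f⟩ (hr : r ≤ b) ⟨r', f'⟩ (hr' : r' ≤ b) h
  simp only at h
  obtain ⟨hq, rfl⟩ := eq_and_eq_of_succ_mul_add_eq hr hr' (by
    rw [← liftPoint_apply_of_notMem hLB, ← liftPoint_apply_of_notMem hLB, h])
  have : f = f' := funext fun j => by
    have := congrFun h j
    rw [liftPoint, liftPoint, hq] at this
    omega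
  rw [this]

lemma mem_liftDomain {k : ℕ} {p : (_ : ℕ) × (Fin n → ℕ)} :
    p ∈ liftDomain b B k ↔ p.1 ≤ b ∧ (if p.1 = 0 then 0 else #B + 1) + ∑ j, p.2 j ≤ k := by
  simp only [liftDomain, mem_sigma, mem_range, mem_filter, mem_sumLe]
  constructor
  · rintro ⟨h1, -, h2⟩
    exact ⟨by omega, h2⟩
  · rintro ⟨h1, h2⟩
    exact ⟨by omega, by omega, h2⟩

lemma card_liftDomain (k : ℕ) :
    #(liftDomain b B k) =
      (n + k).choose n + b * if #B + 1 ≤ k then (n + (k - (#B + 1))).choose n else 0 := by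
  rw [liftDomain, card_sigma, sum_range_succ', if_pos rfl]
  simp only [Nat.succ_ne_zero, if_false, card_filter_add_sum_le, sum_const, card_range,
    smul_eq_mul, zero_add, filter_true_of_mem (fun f hf => mem_sumLe.1 hf), card_sumLe]
  ring

lemma setOf_inDilate_eq (hLB : L ∉ B) (hn : n = 2 * #B + 1) (k : ℕ) :
    {y | InDilate b L B k y} =
      (fun p : (_ : ℕ) × (Fin n → ℕ) => liftPoint b L B p.1 p.2) '' ↑(liftDomain b B k) := by
  ext y
  constructor
  · intro hy
    obtain ⟨r, hr, f, rfl⟩ := exists_liftPoint_eq hLB hy.1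
    exact ⟨⟨r, f⟩, mem_liftDomain.2 ⟨hr, (inDilate_liftPoint_iff hLB hn hr f k).1 hy⟩, rfl⟩
  · rintro ⟨⟨r, f⟩, hp, rfl⟩
    obtain ⟨hr, hf⟩ := mem_liftDomain.1 hp
    exact (inDilate_liftPoint_iff hLB hn hr f k).2 hf

lemma ehrhart_convexHull_simplexVertices (hLB : L ∉ B) (hn : n = 2 * #B + 1) (k : ℕ) :
    ehrhart (convexHull ℝ (simplexVertices b L B : Set (Fin n → ℝ))) k =
      (n + k).choose n + b * if #B + 1 ≤ k then (n + (k - (#B + 1))).choose n else 0 := by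
  have hcast : Function.Injective (Nat.cast ∘ · : (Fin n → ℕ) → Fin n → ℝ) :=
    fun y y' h => funext fun j => Nat.cast_injective (congrFun h j)
  rw [ehrhart, dilate_inter_latticeSet hLB, setOf_inDilate_eq hLB hn, Set.image_image,
    Set.InjOn.ncard_image, Set.ncard_coe_finset, card_liftDomain]
  exact hcast.comp_injOn ((liftPoint_injOn hLB).mono fun p hp => (mem_liftDomain.1 hp).1)

lemma isHStar_convexHull_simplexVertices (hLB : L ∉ B) (hn : n = 2 * #B + 1) :
    IsHStar (convexHull ℝ (simplexVertices b L B : Set (Fin n → ℝ)))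
      (fun i => if i = 0 then 1 else if i = #B + 1 then (b : ℤ) else 0) := by
  refine isHStar_of_ehrhart_series (polyDim_convexHull_of_affineIndependent
    (affineIndependent_simplexVertices hLB) (card_simplexVertices hLB)) (fun i hi => ?_) ?_
  · rw [if_neg (by omega), if_neg (by omega)]
  · rw [mk_one_add_mul_X_pow_mul b (Nat.add_one_ne_zero _)]
    ext k
    simp only [PowerSeries.coeff_mk, ehrhart_convexHull_simplexVertices hLB hn]
    push_cast
    rfl

end Construction

theorem stmt_11_general (s b : ℕ) (hs : 1 ≤ s) :
    ∃ V : Finset (Fin (2 * s - 1) → ℝ),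
      V.card = 2 * s ∧
      (∀ x ∈ V, isLatticePoint x) ∧
      AffineIndependent ℝ (Subtype.val : {x // x ∈ V} → (Fin (2 * s - 1) → ℝ)) ∧
      polyDim (convexHull ℝ (V : Set (Fin (2 * s - 1) → ℝ))) = 2 * s - 1 ∧
      IsHStar (convexHull ℝ (V : Set (Fin (2 * s - 1) → ℝ)))
        (fun i => if i = 0 then 1 else if i = s then (b : ℤ) else 0) := by
  let L : Fin (2 * s - 1) := ⟨0, by omega⟩
  obtain ⟨B, hBL, hB⟩ := exists_subset_card_eq (s := univ.erase L) (n := s - 1) (by simp; omega)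
  have hLB : L ∉ B := fun h => by simpa using hBL h
  have hn : 2 * s - 1 = 2 * #B + 1 := by omega
  have hs' : #B + 1 = s := by omega
  refine ⟨simplexVertices b L B, by rw [card_simplexVertices hLB]; omega,
    fun _ => isLatticePoint_of_mem_simplexVertices, affineIndependent_simplexVertices hLB,
    polyDim_convexHull_of_affineIndependent (affineIndependent_simplexVertices hLB)
      (card_simplexVertices hLB), ?_⟩
  simpa only [hs'] using isHStar_convexHull_simplexVertices (b := b) hLB hn

/-- **Batyrev–Hofscheier.** For all positive integers `s, b` there exists a `(2s-1)`-dimensional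
lattice simplex (a lattice polytope with exactly `2s` affinely independent vertices) whose
`h^*`-polynomial equals `1 + b·tˢ`. -/
theorem stmt_11 (s b : ℕ) (hs : 1 ≤ s) (hb : 1 ≤ b) :
    ∃ V : Finset (Fin (2 * s - 1) → ℝ),
      V.card = 2 * s ∧
      (∀ x ∈ V, isLatticePoint x) ∧
      AffineIndependent ℝ (Subtype.val : {x // x ∈ V} → (Fin (2 * s - 1) → ℝ)) ∧
      polyDim (convexHull ℝ (V : Set (Fin (2 * s - 1) → ℝ))) = 2 * s - 1 ∧
      IsHStar (convexHull ℝ (V : Set (Fin (2 * s - 1) → ℝ)))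
        (fun i => if i = 0 then 1 else if i = s then (b : ℤ) else 0) :=
  stmt_11_general s b hs
end
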